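/- For a micro tree with a single child micro tree in the Farzan–Munro decomposition of a binary tree, the split rank (the number of closing parentheses in the left chunk plus one) equals the portal rank (the inorder position, among the micro tree's nodes and possible attachment positions, of the leaf slot where the child micro tree's root attaches). -/

import Mathlib

/-!
In the BP encoding the nodes of a subtree occupy a contiguous block of positions. A micro tree
with root `r` and single child root `q` is the subtree of `r` minus the subtree of `q`, so its
positions are the block of `r` with the block of `q` cut out, and the canonical two-chunk form
forces the left chunk to end exactly where the block of `q` begins. Closing parentheses appear in
inorder, so a node of the micro tree precedes `q` in inorder iff its closing parenthesis precedes
that of `q`, i.e. iff it lies in the left chunk.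
-/

/-- A binary tree: `leaf` is the empty tree; each internal node has an
optional left and an optional right subtree (possibly `leaf`). -/
inductive BinTree : Type where
  | leaf : BinTree
  | node : BinTree → BinTree → BinTree
deriving DecidableEq

namespace BinTree

/-- Number of nodes of a binary tree. -/
def size : BinTree → ℕ
  | leaf => 0
  | node l r => l.size + r.size + 1

/-- BalancedBP-parenthesis encoding of binary trees:
`BP(empty) = ε`, `BP(t) = '(' ++ BP(t_l) ++ ')' ++ BP(t_r)`.
`true` is an opening parenthesis, `false` a closing one. -/
def bp : BinTree → List Bool
  | leaf => []
  | node l r => true :: (l.bp ++ false :: r.bp)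

/-- The subtree reached by following a path (`false` = left, `true` = right). -/
def subtreeAt : BinTree → List Bool → Option BinTree
  | t, [] => some t
  | leaf, _ :: _ => none
  | node l _, false :: p => subtreeAt l p
  | node _ r, true :: p => subtreeAt r p

/-- A path identifies an actual node of the tree (not an empty slot). -/
def ValidPath (t : BinTree) (p : List Bool) : Prop :=
  ∃ l r, subtreeAt t p = some (node l r)

/-- Index (0-based) of the opening parenthesis of the node at a path. -/
def openIdx : BinTree → List Bool → Option ℕ
  | leaf, _ => none
  | node _ _, [] => some 0
  | node l _, false :: p => (openIdx l p).map (· + 1)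
  | node l r, true :: p => (openIdx r p).map (· + (l.bp.length + 2))

/-- Index (0-based) of the closing parenthesis of the node at a path. -/
def closeIdx : BinTree → List Bool → Option ℕ
  | leaf, _ => none
  | node l _, [] => some (l.bp.length + 1)
  | node l _, false :: p => (closeIdx l p).map (· + 1)
  | node l r, true :: p => (closeIdx r p).map (· + (l.bp.length + 2))

/-- Inorder rank (0-based) of the node at a path. -/
def inorderIdx : BinTree → List Bool → Option ℕ
  | leaf, _ => none
  | node l _, [] => some l.size
  | node l _, false :: p => inorderIdx l p
  | node l r, true :: p => (inorderIdx r p).map (· + (l.size + 1))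

end BinTree

/-- A sequence of parentheses (`true` = '(') is balanced: equally many opening
and closing parentheses, and every prefix has at least as many opening ones. -/
def BalancedBP (s : List Bool) : Prop :=
  s.count true = s.count false ∧
  ∀ k, (s.take k).count false ≤ (s.take k).count true

/-- `excess s k`: number of opening minus closing parentheses among the first `k` symbols. -/
def excess (s : List Bool) (k : ℕ) : ℤ :=
  ((s.take k).count true : ℤ) - ((s.take k).count false : ℤ)

/-- `IsMatch s i j`: positions `i < j` form a matching pair of parentheses
(the standard stack-based matching). -/
def IsMatch (s : List Bool) (i j : ℕ) : Prop :=
  i < j ∧ j < s.length ∧ s[i]? = some true ∧ s[j]? = some false ∧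
  excess s (j + 1) = excess s i ∧
  ∀ k, i < k → k ≤ j → excess s i < excess s k

/-- `EnclosePair s i v j`: `j` is the closing parenthesis whose matching pair
tightly encloses the matching pair `(i, v)`. -/
def EnclosePair (s : List Bool) (i v j : ℕ) : Prop :=
  (∃ i', IsMatch s i' j ∧ i' < i ∧ v < j) ∧
  ∀ i'' j'', IsMatch s i'' j'' → i'' < i → v < j'' → j ≤ j''

/-- Longest common prefix of two paths. -/
def lcp : List Bool → List Bool → List Bool
  | a :: as, b :: bs => if a = b then a :: lcp as bs else []
  | _, _ => []

/-- `M` is a micro tree of `t`: a nonempty, connected set of nodes of `t`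
closed between its root and each of its members. -/
def IsMicroTree (t : BinTree) (M : Set (List Bool)) : Prop :=
  M.Nonempty ∧ (∀ p ∈ M, BinTree.ValidPath t p) ∧
  ∃ r ∈ M, ∀ p ∈ M, r <+: p ∧ ∀ q, r <+: q → q <+: p → BinTree.ValidPath t q → q ∈ M

/-- Outgoing edges of `M` towards children: nodes of `t` outside `M` whose parent is in `M`. -/
def childEdges (t : BinTree) (M : Set (List Bool)) : Set (List Bool) :=
  {q | q ∉ M ∧ BinTree.ValidPath t q ∧ ∃ p ∈ M, ∃ b, q = p ++ [b]}

/-- The set of BP positions (opening and closing parentheses) of the nodes of `M`. -/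
def bpPositions (t : BinTree) (M : Set (List Bool)) : Set ℕ :=
  {k | ∃ p ∈ M, BinTree.openIdx t p = some k ∨ BinTree.closeIdx t p = some k}

namespace BinTree

def HasParenAt (t : BinTree) (p : List Bool) (k : ℕ) : Prop :=
  openIdx t p = some k ∨ closeIdx t p = some k

theorem hasParenAt_leaf (p : List Bool) (k : ℕ) : ¬ HasParenAt leaf p k := by
  simp [HasParenAt, openIdx, closeIdx]

theorem hasParenAt_node_nil (l r : BinTree) (k : ℕ) :
    HasParenAt (node l r) [] k ↔ k = 0 ∨ k = l.bp.length + 1 := by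
  simp [HasParenAt, openIdx, closeIdx, eq_comm]

theorem hasParenAt_node_false (l r : BinTree) (s : List Bool) (k : ℕ) :
    HasParenAt (node l r) (false :: s) k ↔ ∃ j, HasParenAt l s j ∧ k = j + 1 := by
  simp only [HasParenAt, openIdx, closeIdx, Option.map_eq_some_iff]
  grind

theorem hasParenAt_node_true (l r : BinTree) (s : List Bool) (k : ℕ) :
    HasParenAt (node l r) (true :: s) k ↔
      ∃ j, HasParenAt r s j ∧ k = j + (l.bp.length + 2) := by
  simp only [HasParenAt, openIdx, closeIdx, Option.map_eq_some_iff]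
  grind

theorem HasParenAt.lt_length : ∀ {t : BinTree} {p : List Bool} {k : ℕ},
    HasParenAt t p k → k < t.bp.length
  | leaf, p, k, h => absurd h (hasParenAt_leaf p k)
  | node l r, [], k, h => by
    rw [hasParenAt_node_nil] at h
    simp only [bp, List.length_cons, List.length_append]; omega
  | node l r, false :: s, k, h => by
    obtain ⟨j, hj, rfl⟩ := (hasParenAt_node_false l r s k).mp h
    have := hj.lt_length
    simp only [bp, List.length_cons, List.length_append]; omega
  | node l r, true :: s, k, h => by
    obtain ⟨j, hj, rfl⟩ := (hasParenAt_node_true l r s k).mp h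
    have := hj.lt_length
    simp only [bp, List.length_cons, List.length_append]; omega

theorem HasParenAt.inj : ∀ {t : BinTree} {p p' : List Bool} {k : ℕ},
    HasParenAt t p k → HasParenAt t p' k → p = p'
  | leaf, p, _, k, h, _ => absurd h (hasParenAt_leaf p k)
  | node l r, p, p', k, h, h' => by
    rcases p with _ | ⟨_ | _, s⟩ <;> rcases p' with _ | ⟨_ | _, s'⟩ <;>
      simp only [hasParenAt_node_nil, hasParenAt_node_false, hasParenAt_node_true] at h h'
    · rfl
    · obtain ⟨j, hj, rfl⟩ := h'; have := hj.lt_length; omega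
    · obtain ⟨j, -, rfl⟩ := h'; omega
    · obtain ⟨j, hj, rfl⟩ := h; have := hj.lt_length; omega
    · obtain ⟨j, hj, rfl⟩ := h; obtain ⟨j', hj', hjj⟩ := h'
      obtain rfl : j = j' := by omega
      rw [hj.inj hj']
    · obtain ⟨j, hj, rfl⟩ := h; obtain ⟨j', -, hjj⟩ := h'; have := hj.lt_length; omega
    · obtain ⟨j, -, rfl⟩ := h; omega
    · obtain ⟨j, -, rfl⟩ := h; obtain ⟨j', hj', hjj⟩ := h'; have := hj'.lt_length; omega
    · obtain ⟨j, hj, rfl⟩ := h; obtain ⟨j', hj', hjj⟩ := h'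
      obtain rfl : j = j' := by omega
      rw [hj.inj hj']

theorem exists_hasParenAt : ∀ {t : BinTree} {k : ℕ}, k < t.bp.length → ∃ p, HasParenAt t p k
  | leaf, _, hk => by simp [bp] at hk
  | node l r, k, hk => by
    simp only [bp, List.length_cons, List.length_append] at hk
    by_cases hk0 : k = 0
    · exact ⟨[], (hasParenAt_node_nil l r k).mpr (Or.inl hk0)⟩
    by_cases hkl : k ≤ l.bp.length
    · obtain ⟨s, hs⟩ := exists_hasParenAt (t := l) (k := k - 1) (by omega)
      exact ⟨false :: s, (hasParenAt_node_false l r s k).mpr ⟨k - 1, hs, by omega⟩⟩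
    by_cases hkc : k = l.bp.length + 1
    · exact ⟨[], (hasParenAt_node_nil l r k).mpr (Or.inr hkc)⟩
    obtain ⟨s, hs⟩ := exists_hasParenAt (t := r) (k := k - (l.bp.length + 2)) (by omega)
    exact ⟨true :: s, (hasParenAt_node_true l r s k).mpr ⟨_, hs, by omega⟩⟩

theorem HasParenAt.validPath : ∀ {t : BinTree} {p : List Bool} {k : ℕ},
    HasParenAt t p k → ValidPath t p
  | leaf, p, k, h => absurd h (hasParenAt_leaf p k)
  | node l r, [], _, _ => ⟨l, r, rfl⟩
  | node l r, false :: s, k, h => by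
    obtain ⟨j, hj, -⟩ := (hasParenAt_node_false l r s k).mp h
    exact hj.validPath
  | node l r, true :: s, k, h => by
    obtain ⟨j, hj, -⟩ := (hasParenAt_node_true l r s k).mp h
    exact hj.validPath

theorem ValidPath.exists_closeIdx : ∀ {t : BinTree} {p : List Bool},
    ValidPath t p → ∃ c, closeIdx t p = some c
  | leaf, [], ⟨_, _, h⟩ | leaf, _ :: _, ⟨_, _, h⟩ => by simp [subtreeAt] at h
  | node l r, [], _ => ⟨_, rfl⟩
  | node l r, false :: s, h => by
    obtain ⟨c, hc⟩ := ValidPath.exists_closeIdx (t := l) h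
    exact ⟨c + 1, by simp [closeIdx, hc]⟩
  | node l r, true :: s, h => by
    obtain ⟨c, hc⟩ := ValidPath.exists_closeIdx (t := r) h
    exact ⟨c + (l.bp.length + 2), by simp [closeIdx, hc]⟩

theorem ValidPath.exists_inorderIdx : ∀ {t : BinTree} {p : List Bool},
    ValidPath t p → ∃ i, inorderIdx t p = some i
  | leaf, [], ⟨_, _, h⟩ | leaf, _ :: _, ⟨_, _, h⟩ => by simp [subtreeAt] at h
  | node l r, [], _ => ⟨_, rfl⟩
  | node l r, false :: s, h => ValidPath.exists_inorderIdx (t := l) h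
  | node l r, true :: s, h => by
    obtain ⟨i, hi⟩ := ValidPath.exists_inorderIdx (t := r) h
    exact ⟨i + (l.size + 1), by simp [inorderIdx, hi]⟩

theorem subtreeAt_append : ∀ (t : BinTree) (p s : List Bool),
    subtreeAt t (p ++ s) = (subtreeAt t p).bind (subtreeAt · s)
  | _, [], _ => by simp [subtreeAt]
  | leaf, _ :: _, _ => rfl
  | node l _, false :: p, s => subtreeAt_append l p s
  | node _ r, true :: p, s => subtreeAt_append r p s

theorem ValidPath.of_prefix {t : BinTree} {p x : List Bool} (hx : ValidPath t x)
    (hpx : p <+: x) : ValidPath t p := by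
  obtain ⟨s, rfl⟩ := hpx
  obtain ⟨l, r, h⟩ := hx
  rw [subtreeAt_append] at h
  obtain ⟨u, hu, hus⟩ := Option.bind_eq_some_iff.mp h
  cases u with
  | leaf => cases s <;> simp [subtreeAt] at hus
  | node l' r' => exact ⟨l', r', hu⟩

theorem hasParenAt_append : ∀ {t u : BinTree} {p : List Bool}, subtreeAt t p = some u →
    ∃ o, ∀ s k, HasParenAt t (p ++ s) k ↔ ∃ j, HasParenAt u s j ∧ k = j + o
  | t, u, [], h => ⟨0, fun s k => by
      simp only [subtreeAt, Option.some.injEq] at h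
      simp [h]⟩
  | leaf, _, _ :: _, h => by simp [subtreeAt] at h
  | node l r, u, false :: p, h => by
    obtain ⟨o, ho⟩ := hasParenAt_append (t := l) h
    refine ⟨o + 1, fun s k => ?_⟩
    rw [List.cons_append, hasParenAt_node_false]
    simp only [ho]
    grind
  | node l r, u, true :: p, h => by
    obtain ⟨o, ho⟩ := hasParenAt_append (t := r) h
    refine ⟨o + (l.bp.length + 2), fun s k => ?_⟩
    rw [List.cons_append, hasParenAt_node_true]
    simp only [ho]
    grind

theorem inorderIdx_lt_size : ∀ {t : BinTree} {p : List Bool} {i : ℕ},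
    inorderIdx t p = some i → i < t.size
  | leaf, _, _, h => by simp [inorderIdx] at h
  | node l r, [], _, h => by simp_all [inorderIdx, size]
  | node l r, false :: _, _, h => by
    have := inorderIdx_lt_size (t := l) h
    simp only [size]; omega
  | node l r, true :: _, _, h => by
    obtain ⟨i, hi, rfl⟩ := Option.map_eq_some_iff.mp h
    have := inorderIdx_lt_size hi
    simp only [size]; omega

theorem closeIdx_lt_iff_inorderIdx_lt : ∀ {t : BinTree} {p p' : List Bool} {c c' i i' : ℕ},
    closeIdx t p = some c → closeIdx t p' = some c' →
    inorderIdx t p = some i → inorderIdx t p' = some i' → (c < c' ↔ i < i')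
  | leaf, _, _, _, _, _, _, hc, _, _, _ => by simp [closeIdx] at hc
  | node l r, p, p', c, c', i, i', hc, hc', hi, hi' => by
    rcases p with _ | ⟨_ | _, s⟩ <;> rcases p' with _ | ⟨_ | _, s'⟩ <;>
      simp only [closeIdx, inorderIdx, Option.map_eq_some_iff] at hc hc' hi hi'
    -- across sides the bounds of the left subtree separate the indices; on one side, induct
    all_goals
      try obtain ⟨c, hc, rfl⟩ := hc
      try obtain ⟨c', hc', rfl⟩ := hc'
      try obtain ⟨i, hi, rfl⟩ := hi
      try obtain ⟨i', hi', rfl⟩ := hi'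
      try have := (HasParenAt.lt_length (t := l) (Or.inr hc))
      try have := (HasParenAt.lt_length (t := l) (Or.inr hc'))
      try have := inorderIdx_lt_size (t := l) hi
      try have := inorderIdx_lt_size (t := l) hi'
      first
      | omega
      | have := closeIdx_lt_iff_inorderIdx_lt hc hc' hi hi'; omega

def subtreePaths (t : BinTree) (p : List Bool) : Set (List Bool) :=
  {x | ValidPath t x ∧ p <+: x}

theorem bpPositions_subtreePaths {t l r : BinTree} {p : List Bool}
    (h : subtreeAt t p = some (node l r)) :
    ∃ o, HasParenAt t p o ∧
      bpPositions t (subtreePaths t p) = Set.Ico o (o + (node l r).bp.length) := by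
  obtain ⟨o, ho⟩ := hasParenAt_append h
  have hroot : HasParenAt t p o := by
    simpa using (ho [] o).mpr ⟨0, (hasParenAt_node_nil l r 0).mpr (Or.inl rfl), by simp⟩
  refine ⟨o, hroot, Set.ext fun k => ⟨?_, fun hk => ?_⟩⟩
  · rintro ⟨x, ⟨-, s, rfl⟩, hx⟩
    obtain ⟨j, hj, rfl⟩ := (ho s k).mp hx
    have := hj.lt_length
    simp only [Set.mem_Ico]; omega
  · rw [Set.mem_Ico] at hk
    obtain ⟨s, hs⟩ := exists_hasParenAt (t := node l r) (k := k - o) (by omega)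
    have hx := (ho s k).mpr ⟨k - o, hs, by omega⟩
    exact ⟨p ++ s, ⟨hx.validPath, List.prefix_append p s⟩, hx⟩

theorem bpPositions_diff (t : BinTree) (A B : Set (List Bool)) :
    bpPositions t (A \ B) = bpPositions t A \ bpPositions t B := by
  ext k
  constructor
  · rintro ⟨x, ⟨hxA, hxB⟩, hx⟩
    exact ⟨⟨x, hxA, hx⟩, fun ⟨y, hyB, hy⟩ => hxB (HasParenAt.inj hx hy ▸ hyB)⟩
  · rintro ⟨⟨x, hxA, hx⟩, hk⟩
    exact ⟨x, ⟨hxA, fun hxB => hk ⟨x, hxB, hx⟩⟩, hx⟩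

end BinTree

open BinTree

theorem eq_of_Ico_union_Ico_eq_Ico_diff_Ico {a b c d x y z w : ℕ}
    (h : Set.Ico a b ∪ Set.Ico c d = Set.Ico x w \ Set.Ico y z)
    (hab : a < b) (hcanon : b < c ∨ c = d)
    (hxy : x < y) (hyz : y < z) (hzw : z ≤ w) : b = y := by
  have mem := fun k => Set.ext_iff.mp h k
  simp only [Set.mem_union, Set.mem_sdiff, Set.mem_Ico] at mem
  have := mem a; have := mem b; have := mem y; have := mem (y - 1)
  omega

theorem IsMicroTree.exists_eq_subtreePaths_diff {t : BinTree} {M : Set (List Bool)}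
    {q : List Bool} (hM : IsMicroTree t M) (hq : childEdges t M = {q}) :
    ∃ r ∈ M, M = subtreePaths t r \ subtreePaths t q ∧ r <+: q := by
  obtain ⟨-, hvalid, r, hr, hroot⟩ := hM
  have hqE : q ∈ childEdges t M := hq ▸ rfl
  obtain ⟨hqM, hqv, p, hp, β, rfl⟩ := hqE
  have hrq : r <+: p ++ [β] := (hroot p hp).1.trans (List.prefix_append p [β])
  refine ⟨r, hr, Set.ext fun x => ⟨fun hx => ?_, ?_⟩, hrq⟩
  · exact ⟨⟨hvalid x hx, (hroot x hx).1⟩, fun hqx => hqM ((hroot x hx).2 _ hrq hqx.2 hqv)⟩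
  rintro ⟨⟨hxv, s, rfl⟩, hqx⟩
  induction s using List.reverseRecOn with
  | nil => simpa using hr
  | append_singleton s γ ih =>
    rw [← List.append_assoc] at hxv hqx ⊢
    have hs : r ++ s ∈ M :=
      ih (fun hqs => hqx ⟨hxv, hqs.2.trans (List.prefix_append _ _)⟩)
        (hxv.of_prefix (List.prefix_append _ _))
    by_contra hxM
    have hchild : r ++ s ++ [γ] ∈ childEdges t M := ⟨hxM, hxv, r ++ s, hs, γ, rfl⟩
    rw [hq, Set.mem_singleton_iff] at hchild
    exact hqx ⟨hxv, hchild ▸ List.prefix_rfl⟩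

theorem bpPositions_subtreePaths_of_prefix {t : BinTree} {r q : List Bool}
    (hqv : ValidPath t q) (hrq : r <+: q) (hne : r ≠ q) :
    ∃ x y z w, x < y ∧ y < z ∧ z ≤ w ∧
      bpPositions t (subtreePaths t r) = Set.Ico x w ∧
      bpPositions t (subtreePaths t q) = Set.Ico y z := by
  obtain ⟨lq, rq, hsubq⟩ := hqv
  obtain ⟨lr, rr, hsubr⟩ := ValidPath.of_prefix ⟨lq, rq, hsubq⟩ hrq
  obtain ⟨x, hx, hR⟩ := bpPositions_subtreePaths hsubr
  obtain ⟨y, hy, hQ⟩ := bpPositions_subtreePaths hsubq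
  have hsub : subtreePaths t q ⊆ subtreePaths t r := fun p hp => ⟨hp.1, hrq.trans hp.2⟩
  have hlen : 0 < (node lq rq).bp.length := by simp [bp]
  have hIco : Set.Ico y (y + (node lq rq).bp.length) ⊆
      Set.Ico x (x + (node lr rr).bp.length) := by
    rw [← hR, ← hQ]
    rintro k ⟨p, hp, hk⟩
    exact ⟨p, hsub hp, hk⟩
  rw [Set.Ico_subset_Ico_iff (by omega)] at hIco
  have hxy : x ≠ y := fun h => hne (HasParenAt.inj hx (h ▸ hy))
  exact ⟨x, y, _, _, by omega, by omega, hIco.2, hR, hQ⟩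

theorem splitRank_eq_portalRank_general (t : BinTree) (M : Set (List Bool))
    (hM : IsMicroTree t M)
    (q : List Bool) (hq : childEdges t M = {q})
    (a b c d : ℕ)
    (hpos : bpPositions t M = Set.Ico a b ∪ Set.Ico c d)
    (hab : a < b)
    (hcanon : b < c ∨ c = d)
    (iq : ℕ) (hiq : BinTree.inorderIdx t q = some iq) :
    {p ∈ M | ∃ k, BinTree.closeIdx t p = some k ∧ a ≤ k ∧ k < b}.ncard + 1 =
      {p ∈ M | ∃ ip, BinTree.inorderIdx t p = some ip ∧ ip < iq}.ncard + 1 := by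
  obtain ⟨hqM, hqv, -⟩ : q ∈ childEdges t M := hq ▸ rfl
  obtain ⟨r, hrM, hMeq, hrq⟩ := hM.exists_eq_subtreePaths_diff hq
  obtain ⟨x, y, z, w, hxy, hyz, hzw, hR, hQ⟩ :=
    bpPositions_subtreePaths_of_prefix hqv hrq (ne_of_mem_of_not_mem hrM hqM)
  have hS : bpPositions t M = Set.Ico x w \ Set.Ico y z := by
    rw [hMeq, bpPositions_diff, hR, hQ]
  have hby : b = y := eq_of_Ico_union_Ico_eq_Ico_diff_Ico (hpos ▸ hS) hab hcanon hxy hyz hzw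
  obtain ⟨cq, hcq⟩ := hqv.exists_closeIdx
  have hcqQ : cq ∈ Set.Ico y z := hQ ▸ ⟨q, ⟨hqv, List.prefix_rfl⟩, Or.inr hcq⟩
  congr 2
  ext p
  simp only [Set.mem_ofPred_eq, and_congr_right_iff]
  intro hpM
  have hpv : ValidPath t p := (hMeq ▸ hpM).1.1
  obtain ⟨k, hk⟩ := hpv.exists_closeIdx
  obtain ⟨ip, hip⟩ := hpv.exists_inorderIdx
  have hkS : k ∈ Set.Ico x w \ Set.Ico y z := hS ▸ ⟨p, hpM, Or.inr hk⟩
  have hkS' : k ∈ Set.Ico a b ∪ Set.Ico c d := hpos ▸ ⟨p, hpM, Or.inr hk⟩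
  simp only [hk, hip, Option.some.injEq, exists_eq_left',
    ← closeIdx_lt_iff_inorderIdx_lt hk hcq hip hiq]
  simp only [Set.mem_sdiff, Set.mem_Ico, Set.mem_union] at hkS hkS' hcqQ
  omega

/-- for a micro tree with a single child micro tree, the split
rank (number of closing parentheses in the left chunk, plus one) equals the
portal rank (the 1-based inorder rank of the attached child root within the
micro tree extended by that root). -/
theorem splitRank_eq_portalRank (t : BinTree) (M : Set (List Bool))
    (hM : IsMicroTree t M)
    (q : List Bool) (hq : childEdges t M = {q})
    (a b c d : ℕ)
    (hpos : bpPositions t M = Set.Ico a b ∪ Set.Ico c d)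
    (hab : a < b) (hbc : b ≤ c) (hcd : c ≤ d)
    (hcanon : b < c ∨ c = d)
    (iq : ℕ) (hiq : BinTree.inorderIdx t q = some iq) :
    {p ∈ M | ∃ k, BinTree.closeIdx t p = some k ∧ a ≤ k ∧ k < b}.ncard + 1 =
      {p ∈ M | ∃ ip, BinTree.inorderIdx t p = some ip ∧ ip < iq}.ncard + 1 :=
  splitRank_eq_portalRank_general t M hM q hq a b c d hpos hab hcanon iq hiq
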